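/- arXiv:2012.01984 — 4 statements merged into one kernel-verified Lean document; each statement's English description precedes it below -/
import Mathlib

section
/- Let $y_2$ be a solution of the Riccati equation $y' + f_2(t)y^2 + g_2(t)y + h_2(t) = 0$ on $[t_0, \tau_0)$ (with $t_0 < \tau_0 \le +\infty$), and let $\eta_1, \eta_2$ be continuously differentiable functions on $[t_0, \tau_0)$ satisfying the differential inequalities $\eta_k' + f_k(t)\eta_k^2 + g_k(t)\eta_k + h_k(t) \ge 0$ on $[t_0, \tau_0)$ for $k = 1, 2$, with $y_2(t_0) \le \eta_k(t_0)$ for $k = 1, 2$. Assume $f_1(t) \ge 0$ on $[t_0, \tau_0)$ and that for some $\gamma \in [y_2(t_0), \eta_1(t_0)]$ the inequality $\gamma - y_2(t_0) + \int_{t_0}^{t} \exp\{\int_{t_0}^{\tau}[f_1(s)(\eta_1(s) + \eta_2(s)) + g_1(s)]\,ds\}\,[(f_2(\tau) - f_1(\tau))\,y_2(\tau)^2 + (g_2(\tau) - g_1(\tau))\,y_2(\tau) + h_2(\tau) - h_1(\tau)]\,d\tau \ge 0$ holds for all $t \in [t_0, \tau_0)$. Then the Riccati equation $y' + f_1(t)y^2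 + g_1(t)y + h_1(t) = 0$ has a solution $y_1$ on the whole interval $[t_0, \tau_0)$ with $y_1(t_0) \ge \gamma$ and $y_1(t) \ge y_2(t)$ for all $t \in [t_0, \tau_0)$. -/
/-!
A solution `y` of the first equation with `y t₀ = γ` is trapped between `y₂` and `η₁`. Indeed
`η₁ - y` (and likewise `η₂ - y₂`) satisfies a linear differential inequality `d' + L d ≥ 0`, hence
stays nonnegative. The difference `u = y - y₂` solves `u' + β u = Q` with
`β = f₁ (y + y₂) + g₁ ≤ f₁ (η₁ + η₂) + g₁ = α` because `f₁ ≥ 0`, and comparing `e^{∫α} u` with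
`u t₀ + ∫ e^{∫α} Q ≥ 0` through the same linear inequality gives `u ≥ 0`.

This a priori bound confines every solution on `[t₀, T]` to a fixed ball, on which the Riccati field
is uniformly Lipschitz and bounded; so Picard–Lindelöf steps of a fixed length reach `T`, and the
solution is unique there. The solutions on the intervals `[t₀, T]`, `T < τ₀`, therefore agree and
glue to a solution on `[t₀, τ₀)`.
-/

open Set Metric intervalIntegral
open scoped NNReal Topology

theorem ContinuousOn.hasDerivWithinAt_integral_Icc {φ : ℝ → ℝ} {a b t : ℝ}
    (hφ : ContinuousOn φ (Icc a b)) (ht : t ∈ Icc a b) :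
    HasDerivWithinAt (fun u ↦ ∫ x in a..u, φ x) (φ t) (Icc a b) t := by
  have hab : a ≤ b := ht.1.trans ht.2
  set ψ := IccExtend hab ((Icc a b).domRestrict φ)
  have hψφ : EqOn ψ φ (Icc a b) := fun x hx ↦ IccExtend_of_mem hab _ hx
  have hint : ∀ u ∈ Icc a b, ∫ x in a..u, ψ x = ∫ x in a..u, φ x := fun u hu ↦
    integral_congr (hψφ.mono (uIcc_subset_Icc (left_mem_Icc.2 hab) hu))
  exact ((hφ.domRestrict.Icc_extend'.integral_hasStrictDerivAt a t).hasDerivAt.hasDerivWithinAt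
    |>.congr (fun u hu ↦ (hint u hu).symm) (hint t ht).symm).congr_deriv (hψφ ht)

theorem nonneg_of_hasDerivWithinAt_add_mul_nonneg {d d' L : ℝ → ℝ} {a b : ℝ}
    (hL : ContinuousOn L (Icc a b))
    (hd : ∀ t ∈ Icc a b, HasDerivWithinAt d (d' t) (Icc a b) t)
    (hineq : ∀ t ∈ Icc a b, 0 ≤ d' t + L t * d t) (ha : 0 ≤ d a) :
    ∀ t ∈ Icc a b, 0 ≤ d t := by
  set Λ := fun u ↦ ∫ x in a..u, L x
  have hφ : ∀ t ∈ Icc a b, HasDerivWithinAt (fun u ↦ Real.exp (Λ u) * d u)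
      (Real.exp (Λ t) * (d' t + L t * d t)) (Icc a b) t := fun t ht ↦
    (((hL.hasDerivWithinAt_integral_Icc ht).exp).mul (hd t ht)).congr_deriv (by ring)
  have hmono : MonotoneOn (fun u ↦ Real.exp (Λ u) * d u) (Icc a b) := by
    refine monotoneOn_of_hasDerivWithinAt_nonneg (convex_Icc a b)
      (f' := fun t ↦ Real.exp (Λ t) * (d' t + L t * d t))
      (HasDerivWithinAt.continuousOn hφ) ?_ ?_ <;> rw [interior_Icc]
    · exact fun t ht ↦ (hφ t (Ioo_subset_Icc_self ht)).mono Ioo_subset_Icc_self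
    · exact fun t ht ↦ mul_nonneg (Real.exp_nonneg _) (hineq t (Ioo_subset_Icc_self ht))
  intro t ht
  have h := hmono (left_mem_Icc.2 (ht.1.trans ht.2)) ht ht.1
  simp only [Λ, integral_same, Real.exp_zero, one_mul] at h
  exact nonneg_of_mul_nonneg_right (ha.trans h) (Real.exp_pos _)

theorem nonneg_of_hasDerivWithinAt_eq_sub_mul {u Q α β : ℝ → ℝ} {a b : ℝ}
    (hα : ContinuousOn α (Icc a b)) (hβ : ContinuousOn β (Icc a b))
    (hQ : ContinuousOn Q (Icc a b)) (hβα : ∀ t ∈ Icc a b, β t ≤ α t)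
    (hu : ∀ t ∈ Icc a b, HasDerivWithinAt u (Q t - β t * u t) (Icc a b) t)
    (hint : ∀ t ∈ Icc a b, 0 ≤ u a + ∫ τ in a..t, Real.exp (∫ s in a..τ, α s) * Q τ) :
    ∀ t ∈ Icc a b, 0 ≤ u t := by
  set A := fun τ ↦ ∫ s in a..τ, α s
  set P := fun t ↦ u a + ∫ τ in a..t, Real.exp (A τ) * Q τ
  have hA : ∀ t ∈ Icc a b, HasDerivWithinAt A (α t) (Icc a b) t := fun t ht ↦
    hα.hasDerivWithinAt_integral_Icc ht
  have hP : ∀ t ∈ Icc a b, HasDerivWithinAt P (Real.exp (A t) * Q t) (Icc a b) t := by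
    have hcont : ContinuousOn (fun τ ↦ Real.exp (A τ) * Q τ) (Icc a b) :=
      (HasDerivWithinAt.continuousOn hA).rexp.mul hQ
    exact fun t ht ↦ (hcont.hasDerivWithinAt_integral_Icc ht).const_add _
  -- `w = e^A u - P` satisfies `w' = (α - β) (w + P)` with `P ≥ 0`, so Grönwall keeps it `≥ 0`.
  have hw := nonneg_of_hasDerivWithinAt_add_mul_nonneg (d := fun t ↦ Real.exp (A t) * u t - P t)
    (L := fun t ↦ β t - α t) (hβ.sub hα)
    (fun t ht ↦ ((hA t ht).exp.mul (hu t ht)).sub (hP t ht))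
    (fun t ht ↦ by
      have hPt : 0 ≤ P t := hint t ht
      exact (mul_nonneg (sub_nonneg.2 (hβα t ht)) hPt).trans_eq (by ring))
    (by simp [A, P])
  intro t ht
  have hwt : 0 ≤ Real.exp (A t) * u t - P t := hw t ht
  have hPt : 0 ≤ P t := hint t ht
  exact nonneg_of_mul_nonneg_right (by linarith) (Real.exp_pos (A t))

def riccatiField (f g h : ℝ → ℝ) (t x : ℝ) : ℝ := -(f t * x ^ 2 + g t * x + h t)

theorem le_of_riccati_supersolution {f g h y η η' : ℝ → ℝ} {a b : ℝ}
    (hf : ContinuousOn f (Icc a b)) (hg : ContinuousOn g (Icc a b))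
    (hy : IsIntegralCurveOn y (riccatiField f g h) (Icc a b))
    (hη : ∀ t ∈ Icc a b, HasDerivWithinAt η (η' t) (Icc a b) t)
    (hsuper : ∀ t ∈ Icc a b, 0 ≤ η' t + f t * η t ^ 2 + g t * η t + h t) (ha : y a ≤ η a) :
    ∀ t ∈ Icc a b, y t ≤ η t := by
  have hd := nonneg_of_hasDerivWithinAt_add_mul_nonneg (d := fun t ↦ η t - y t)
    (L := fun t ↦ f t * (η t + y t) + g t)
    (hf.mul ((HasDerivWithinAt.continuousOn hη).add hy.continuousOn) |>.add hg)
    (fun t ht ↦ (hη t ht).sub (hy t ht))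
    (fun t ht ↦ by have := hsuper t ht; simp only [riccatiField]; linarith)
    (sub_nonneg.2 ha)
  exact fun t ht ↦ sub_nonneg.1 (hd t ht)

theorem mem_Icc_of_isIntegralCurveOn_riccatiField {a b γ : ℝ}
    {f₁ f₂ g₁ g₂ h₁ h₂ y y₂ η₁ η₂ η₁' η₂' : ℝ → ℝ}
    (hf₁ : ContinuousOn f₁ (Icc a b)) (hf₂ : ContinuousOn f₂ (Icc a b))
    (hg₁ : ContinuousOn g₁ (Icc a b)) (hg₂ : ContinuousOn g₂ (Icc a b))
    (hh₁ : ContinuousOn h₁ (Icc a b)) (hh₂ : ContinuousOn h₂ (Icc a b))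
    (hy₂ : IsIntegralCurveOn y₂ (riccatiField f₂ g₂ h₂) (Icc a b))
    (hη₁ : ∀ t ∈ Icc a b, HasDerivWithinAt η₁ (η₁' t) (Icc a b) t)
    (hη₂ : ∀ t ∈ Icc a b, HasDerivWithinAt η₂ (η₂' t) (Icc a b) t)
    (hineq₁ : ∀ t ∈ Icc a b, 0 ≤ η₁' t + f₁ t * η₁ t ^ 2 + g₁ t * η₁ t + h₁ t)
    (hineq₂ : ∀ t ∈ Icc a b, 0 ≤ η₂' t + f₂ t * η₂ t ^ 2 + g₂ t * η₂ t + h₂ t)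
    (hinit₂ : y₂ a ≤ η₂ a) (hf₁pos : ∀ t ∈ Icc a b, 0 ≤ f₁ t) (hγ : γ ∈ Icc (y₂ a) (η₁ a))
    (hint : ∀ t ∈ Icc a b, 0 ≤ γ - y₂ a +
      ∫ τ in a..t, Real.exp (∫ s in a..τ, f₁ s * (η₁ s + η₂ s) + g₁ s) *
        ((f₂ τ - f₁ τ) * y₂ τ ^ 2 + (g₂ τ - g₁ τ) * y₂ τ + h₂ τ - h₁ τ))
    (hy : IsIntegralCurveOn y (riccatiField f₁ g₁ h₁) (Icc a b)) (hya : y a = γ) :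
    ∀ t ∈ Icc a b, y t ∈ Icc (y₂ t) (η₁ t) := by
  have hy₂η₂ := le_of_riccati_supersolution hf₂ hg₂ hy₂ hη₂ hineq₂ hinit₂
  have hyη₁ := le_of_riccati_supersolution hf₁ hg₁ hy hη₁ hineq₁ (hya ▸ hγ.2)
  have cy := hy.continuousOn
  have cy₂ := hy₂.continuousOn
  have cη₁ := HasDerivWithinAt.continuousOn hη₁
  have cη₂ := HasDerivWithinAt.continuousOn hη₂
  have hy₂y := nonneg_of_hasDerivWithinAt_eq_sub_mul (u := fun t ↦ y t - y₂ t)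
    (α := fun s ↦ f₁ s * (η₁ s + η₂ s) + g₁ s) (β := fun s ↦ f₁ s * (y s + y₂ s) + g₁ s)
    (Q := fun τ ↦ (f₂ τ - f₁ τ) * y₂ τ ^ 2 + (g₂ τ - g₁ τ) * y₂ τ + h₂ τ - h₁ τ)
    (by fun_prop) (by fun_prop) (by fun_prop)
    (fun t ht ↦ by gcongr; exacts [hf₁pos t ht, hyη₁ t ht, hy₂η₂ t ht])
    (fun t ht ↦ ((hy t ht).sub (hy₂ t ht)).congr_deriv (by simp only [riccatiField]; ring))
    (fun t ht ↦ by simpa only [hya] using hint t ht)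
  exact fun t ht ↦ ⟨sub_nonneg.1 (hy₂y t ht), hyη₁ t ht⟩

section IntegralCurve

variable {E : Type*} [NormedAddCommGroup E] [NormedSpace ℝ E] {v : ℝ → E → E}

theorem IsIntegralCurveOn.Icc_glue {y z : ℝ → E} {a b c : ℝ} (hab : a ≤ b) (hbc : b ≤ c)
    (hy : IsIntegralCurveOn y v (Icc a b)) (hz : IsIntegralCurveOn z v (Icc b c))
    (hyz : y b = z b) :
    IsIntegralCurveOn (fun t ↦ if t ≤ b then y t else z t) v (Icc a c) := by
  set w := fun t ↦ if t ≤ b then y t else z t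
  have hwy : EqOn w y (Icc a b) := fun t ht ↦ if_pos ht.2
  have hwz : EqOn w z (Icc b c) := fun t ht ↦ by
    rcases ht.1.eq_or_lt with rfl | hlt
    · exact (if_pos le_rfl).trans hyz
    · exact if_neg hlt.not_ge
  have hw : ∀ t, HasDerivWithinAt w (v t (w t)) (Icc a b ∪ Icc b c) t := fun t ↦ by
    refine .union ?_ ?_
    · by_cases ht : t ∈ Icc a b
      · exact (hy t ht).congr hwy (hwy ht) |>.congr_deriv (by rw [hwy ht])
      · exact HasFDerivWithinAt.of_notMem_closure (by rwa [closure_Icc])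
    · by_cases ht : t ∈ Icc b c
      · exact (hz t ht).congr hwz (hwz ht) |>.congr_deriv (by rw [hwz ht])
      · exact HasFDerivWithinAt.of_notMem_closure (by rwa [closure_Icc])
  rw [← Icc_union_Icc_eq_Icc hab hbc]
  exact fun t _ ↦ hw t

theorem IsIntegralCurveOn.exists_extend_Icc [CompleteSpace E] {y : ℝ → E} {a s s' R : ℝ}
    {K C : ℝ≥0} (hy : IsIntegralCurveOn y v (Icc a s)) (has : a ≤ s) (hss' : s ≤ s')
    (hys : ‖y s‖ ≤ R) (hlip : ∀ t ∈ Icc s s', LipschitzOnWith K (v t) (closedBall 0 (R + 1)))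
    (hcont : ∀ x ∈ closedBall (0 : E) (R + 1), ContinuousOn (v · x) (Icc s s'))
    (hbound : ∀ t ∈ Icc s s', ∀ x ∈ closedBall (0 : E) (R + 1), ‖v t x‖ ≤ C)
    (hstep : C * (s' - s) ≤ 1) :
    ∃ w, w a = y a ∧ IsIntegralCurveOn w v (Icc a s') := by
  have hball : closedBall (y s) (1 : ℝ≥0) ⊆ closedBall 0 (R + 1) :=
    closedBall_subset_closedBall' (by rw [dist_zero_right, NNReal.coe_one]; linarith)
  have hpl : IsPicardLindelof v (tmin := s) (tmax := s') ⟨s, left_mem_Icc.2 hss'⟩ (y s) 1 0 C K :=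
    { lipschitzOnWith := fun t ht ↦ (hlip t ht).mono hball
      continuousOn := fun x hx ↦ hcont x (hball hx)
      norm_le := fun t ht x hx ↦ hbound t ht x (hball hx)
      mul_max_le := by simpa [max_eq_left (sub_nonneg.2 hss')] using hstep }
  obtain ⟨z, hz0, hz⟩ := hpl.exists_eq_forall_mem_Icc_hasDerivWithinAt₀
  exact ⟨_, if_pos has, hy.Icc_glue has hss' hz hz0.symm⟩

theorem exists_isIntegralCurveOn_Icc_of_norm_le [CompleteSpace E] {a b R : ℝ} {K C : ℝ≥0}
    (x₀ : E) (hab : a ≤ b)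
    (hlip : ∀ t ∈ Icc a b, LipschitzOnWith K (v t) (closedBall 0 (R + 1)))
    (hcont : ∀ x ∈ closedBall (0 : E) (R + 1), ContinuousOn (v · x) (Icc a b))
    (hbound : ∀ t ∈ Icc a b, ∀ x ∈ closedBall (0 : E) (R + 1), ‖v t x‖ ≤ C)
    (hapriori : ∀ s ∈ Icc a b, ∀ y : ℝ → E, y a = x₀ → IsIntegralCurveOn y v (Icc a s) →
      ‖y s‖ ≤ R) :
    ∃ y, y a = x₀ ∧ IsIntegralCurveOn y v (Icc a b) := by
  -- The a priori bound makes Picard–Lindelöf steps of a uniform length `δ` possible.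
  set δ : ℝ := 1 / (C + 1)
  have hδ : 0 < δ := by positivity
  have hCδ : C * δ ≤ 1 := by rw [mul_one_div, div_le_one (by positivity)]; linarith
  have hsteps : ∀ n : ℕ, ∃ y, y a = x₀ ∧ IsIntegralCurveOn y v (Icc a (min b (a + n * δ))) := by
    intro n
    induction n with
    | zero =>
      exact ⟨fun _ ↦ x₀, rfl, fun _ _ ↦ HasFDerivWithinAt.of_subsingleton (by simp [hab])⟩
    | succ n ih =>
      obtain ⟨y, hy0, hy⟩ := ih
      set s := min b (a + n * δ)
      set s' := min b (a + (n + 1 : ℕ) * δ)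
      have has : a ≤ s := le_min hab (by have := n.cast_nonneg (α := ℝ); nlinarith)
      have hss' : s ≤ s' := min_le_min_left _ (by push_cast; nlinarith)
      have hs'b : s' ≤ b := min_le_left _ _
      have hs's : s' ≤ s + δ := by
        rw [← min_add_add_right]
        exact min_le_min (le_add_of_nonneg_right hδ.le) (by push_cast; linarith)
      have hsub : Icc s s' ⊆ Icc a b := Icc_subset_Icc has hs'b
      obtain ⟨w, hw0, hw⟩ := hy.exists_extend_Icc has hss'
        (hapriori s ⟨has, hss'.trans hs'b⟩ y hy0 hy) (fun t ht ↦ hlip t (hsub ht))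
        (fun x hx ↦ (hcont x hx).mono hsub) (fun t ht ↦ hbound t (hsub ht))
        ((mul_le_mul_of_nonneg_left (by linarith) C.2).trans hCδ)
      exact ⟨w, hw0.trans hy0, hw⟩
  obtain ⟨n, hn⟩ := exists_nat_ge ((b - a) / δ)
  obtain ⟨y, hy0, hy⟩ := hsteps n
  rw [min_eq_left (by rw [div_le_iff₀ hδ] at hn; linarith)] at hy
  exact ⟨y, hy0, hy⟩

theorem IsIntegralCurveOn.eqOn_Icc {y z : ℝ → E} {s : Set E} {K : ℝ≥0} {a b : ℝ}
    (hv : ∀ t ∈ Icc a b, LipschitzOnWith K (v t) s)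
    (hy : IsIntegralCurveOn y v (Icc a b)) (hys : ∀ t ∈ Icc a b, y t ∈ s)
    (hz : IsIntegralCurveOn z v (Icc a b)) (hzs : ∀ t ∈ Icc a b, z t ∈ s) (h : y a = z a) :
    EqOn y z (Icc a b) :=
  ODE_solution_unique_of_mem_Icc_right (fun t ht ↦ hv t (Ico_subset_Icc_self ht))
    hy.continuousOn
    (fun t ht ↦ (hy t (Ico_subset_Icc_self ht)).mono_of_mem_nhdsWithin (Icc_mem_nhdsGE_of_mem ht))
    (fun t ht ↦ hys t (Ico_subset_Icc_self ht)) hz.continuousOn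
    (fun t ht ↦ (hz t (Ico_subset_Icc_self ht)).mono_of_mem_nhdsWithin (Icc_mem_nhdsGE_of_mem ht))
    (fun t ht ↦ hzs t (Ico_subset_Icc_self ht)) h

theorem exists_isIntegralCurveOn_of_forall_Icc {I : Set ℝ} {t₀ : ℝ} {x₀ : E}
    (hI : I.OrdConnected) (ht₀ : IsLeast I t₀) (hmax : ∀ t ∈ I, ∃ T ∈ I, t < T)
    (hwellposed : ∀ T ∈ I, (∃ y, y t₀ = x₀ ∧ IsIntegralCurveOn y v (Icc t₀ T)) ∧
      ∀ y z, y t₀ = x₀ → IsIntegralCurveOn y v (Icc t₀ T) →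
        z t₀ = x₀ → IsIntegralCurveOn z v (Icc t₀ T) → EqOn y z (Icc t₀ T)) :
    ∃ y, y t₀ = x₀ ∧ IsIntegralCurveOn y v I := by
  choose! S hSI hS using hmax
  choose! sol hsol0 hsol using fun T hT ↦ (hwellposed T hT).1
  refine ⟨fun t ↦ sol (S t) t, hsol0 _ (hSI t₀ ht₀.1), fun t ht ↦ ?_⟩
  have hIcc : Icc t₀ (S t) ⊆ I := hI.out ht₀.1 (hSI t ht)
  have heq : EqOn (fun t' ↦ sol (S t') t') (sol (S t)) (Icc t₀ (S t)) := fun t' ht' ↦ by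
    have ht'I := hSI t' (hIcc ht')
    have hm : min (S t') (S t) ∈ I :=
      hIcc ⟨le_min (ht₀.2 ht'I) (ht₀.2 (hSI t ht)), min_le_right _ _⟩
    exact (hwellposed _ hm).2 _ _
      (hsol0 _ ht'I) ((hsol _ ht'I).mono (Icc_subset_Icc_right (min_le_left _ _)))
      (hsol0 _ (hSI t ht)) ((hsol _ (hSI t ht)).mono (Icc_subset_Icc_right (min_le_right _ _)))
      ⟨ht'.1, le_min (hS t' (hIcc ht')).le ht'.2⟩
  have hmem : t ∈ Icc t₀ (S t) := ⟨ht₀.2 ht, (hS t ht).le⟩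
  have hnhds : Icc t₀ (S t) ∈ 𝓝[I] t :=
    mem_nhdsWithin.2 ⟨Iio (S t), isOpen_Iio, hS t ht, fun x hx ↦ ⟨ht₀.2 hx.2, hx.1.le⟩⟩
  exact ((hsol _ (hSI t ht) t hmem).congr heq (heq hmem)).mono_of_mem_nhdsWithin hnhds

end IntegralCurve

theorem riccatiField_exists_lipschitzOnWith_norm_le {f g h : ℝ → ℝ} {a b : ℝ}
    (hf : ContinuousOn f (Icc a b)) (hg : ContinuousOn g (Icc a b))
    (hh : ContinuousOn h (Icc a b)) (ρ : ℝ) :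
    ∃ K C : ℝ≥0, (∀ t ∈ Icc a b, LipschitzOnWith K (riccatiField f g h t) (closedBall 0 ρ)) ∧
      ∀ t ∈ Icc a b, ∀ x ∈ closedBall (0 : ℝ) ρ, ‖riccatiField f g h t x‖ ≤ C := by
  obtain ⟨Cf, hCf⟩ := isCompact_Icc.exists_bound_of_continuousOn hf
  obtain ⟨Cg, hCg⟩ := isCompact_Icc.exists_bound_of_continuousOn hg
  obtain ⟨Ch, hCh⟩ := isCompact_Icc.exists_bound_of_continuousOn hh
  simp only [Real.norm_eq_abs] at hCf hCg hCh
  refine ⟨(Cf * (2 * ρ) + Cg).toNNReal, (Cf * ρ ^ 2 + Cg * ρ + Ch).toNNReal,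
    fun t ht ↦ LipschitzOnWith.of_dist_le_mul fun x hx x' hx' ↦ ?_, fun t ht x hx ↦ ?_⟩
  · rw [mem_closedBall_zero_iff, Real.norm_eq_abs] at hx hx'
    have hf0 := (abs_nonneg _).trans (hCf t ht)
    have hcoef : |f t * (x + x') + g t| ≤ Cf * (2 * ρ) + Cg := calc
      _ ≤ |f t| * |x + x'| + |g t| := by rw [← abs_mul]; exact abs_add_le _ _
      _ ≤ Cf * (ρ + ρ) + Cg := by
        gcongr; exacts [hCf t ht, (abs_add_le x x').trans (by gcongr), hCg t ht]
      _ = Cf * (2 * ρ) + Cg := by ring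
    have hdiff : riccatiField f g h t x - riccatiField f g h t x' =
        -((f t * (x + x') + g t) * (x - x')) := by unfold riccatiField; ring
    rw [Real.dist_eq, Real.dist_eq, hdiff, abs_neg, abs_mul]
    exact mul_le_mul_of_nonneg_right (hcoef.trans (Real.le_coe_toNNReal _)) (abs_nonneg _)
  · rw [mem_closedBall_zero_iff, Real.norm_eq_abs] at hx
    refine le_trans ?_ (Real.le_coe_toNNReal _)
    have hf0 := (abs_nonneg _).trans (hCf t ht)
    have hg0 := (abs_nonneg _).trans (hCg t ht)
    calc ‖riccatiField f g h t x‖ ≤ |f t * x ^ 2| + |g t * x| + |h t| := by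
          rw [riccatiField, norm_neg, Real.norm_eq_abs]
          exact (abs_add_le _ _).trans (add_le_add_left (abs_add_le _ _) _)
      _ ≤ Cf * ρ ^ 2 + Cg * ρ + Ch := by
          rw [abs_mul, abs_mul, abs_pow]
          gcongr; exacts [hCf t ht, hCg t ht, hCh t ht]

theorem riccatiField_wellPosed_Icc {f g h lo hi : ℝ → ℝ} {a b x₀ : ℝ} (hab : a ≤ b)
    (hf : ContinuousOn f (Icc a b)) (hg : ContinuousOn g (Icc a b))
    (hh : ContinuousOn h (Icc a b)) (hlo : ContinuousOn lo (Icc a b))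
    (hhi : ContinuousOn hi (Icc a b))
    (hbounds : ∀ s ∈ Icc a b, ∀ y, y a = x₀ → IsIntegralCurveOn y (riccatiField f g h) (Icc a s) →
      y s ∈ Icc (lo s) (hi s)) :
    (∃ y, y a = x₀ ∧ IsIntegralCurveOn y (riccatiField f g h) (Icc a b)) ∧
      ∀ y z, y a = x₀ → IsIntegralCurveOn y (riccatiField f g h) (Icc a b) →
        z a = x₀ → IsIntegralCurveOn z (riccatiField f g h) (Icc a b) → EqOn y z (Icc a b) := by
  obtain ⟨Rlo, hRlo⟩ := isCompact_Icc.exists_bound_of_continuousOn hlo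
  obtain ⟨Rhi, hRhi⟩ := isCompact_Icc.exists_bound_of_continuousOn hhi
  set R := max Rlo Rhi
  have hnorm : ∀ s ∈ Icc a b, ∀ y, y a = x₀ → IsIntegralCurveOn y (riccatiField f g h) (Icc a s) →
      ‖y s‖ ≤ R := fun s hs y hy0 hy ↦
    have hys := hbounds s hs y hy0 hy
    (abs_le_max_abs_abs hys.1 hys.2).trans (max_le_max (hRlo s hs) (hRhi s hs))
  obtain ⟨K, C, hK, hC⟩ := riccatiField_exists_lipschitzOnWith_norm_le hf hg hh (R + 1)
  refine ⟨exists_isIntegralCurveOn_Icc_of_norm_le x₀ hab hK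
    (fun x _ ↦ by unfold riccatiField; fun_prop) hC hnorm, fun y z hy0 hy hz0 hz ↦ ?_⟩
  have hball : ∀ w, w a = x₀ → IsIntegralCurveOn w (riccatiField f g h) (Icc a b) →
      ∀ t ∈ Icc a b, w t ∈ closedBall 0 (R + 1) := fun w hw0 hw t ht ↦
    mem_closedBall_zero_iff.2 <| (hnorm t ht w hw0 (hw.mono (Icc_subset_Icc_right ht.2))).trans
      (le_add_of_nonneg_right zero_le_one)
  exact hy.eqOn_Icc hK (hball y hy0 hy) hz (hball z hz0 hz) (hy0.trans hz0.symm)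

theorem EReal.ordConnected_isLeast_noMax_setOf {t₀ : ℝ} {τ₀ : EReal} (hτ₀ : (t₀ : EReal) < τ₀) :
    let I := {t : ℝ | t₀ ≤ t ∧ (t : EReal) < τ₀}
    I.OrdConnected ∧ IsLeast I t₀ ∧ ∀ t ∈ I, ∃ T ∈ I, t < T := by
  refine ⟨⟨fun _ hx _ hy _ hz ↦ ⟨hx.1.trans hz.1, (EReal.coe_le_coe_iff.2 hz.2).trans_lt hy.2⟩⟩,
    ⟨⟨le_rfl, hτ₀⟩, fun _ ht ↦ ht.1⟩, fun t ht ↦ ?_⟩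
  obtain ⟨T, htT, hT⟩ := exists_between_coe_real ht.2
  exact ⟨T, ⟨ht.1.trans (EReal.coe_lt_coe_iff.1 htT).le, hT⟩, EReal.coe_lt_coe_iff.1 htT⟩

theorem riccati_comparison_general
    (t₀ : ℝ) (τ₀ : EReal) (hτ₀ : (t₀ : EReal) < τ₀)
    (f₁ f₂ g₁ g₂ h₁ h₂ : ℝ → ℝ)
    (hf₁ : ContinuousOn f₁ (Ici t₀)) (hf₂ : ContinuousOn f₂ (Ici t₀))
    (hg₁ : ContinuousOn g₁ (Ici t₀)) (hg₂ : ContinuousOn g₂ (Ici t₀))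
    (hh₁ : ContinuousOn h₁ (Ici t₀)) (hh₂ : ContinuousOn h₂ (Ici t₀))
    (I : Set ℝ) (hI : I = {t : ℝ | t₀ ≤ t ∧ (t : EReal) < τ₀})
    (y₂ : ℝ → ℝ)
    (hy₂ : ∀ t ∈ I, HasDerivWithinAt y₂
      (-(f₂ t * y₂ t ^ 2 + g₂ t * y₂ t + h₂ t)) I t)
    (η₁ η₂ η₁' η₂' : ℝ → ℝ)
    (hη₁ : ∀ t ∈ I, HasDerivWithinAt η₁ (η₁' t) I t)
    (hη₂ : ∀ t ∈ I, HasDerivWithinAt η₂ (η₂' t) I t)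
    (hineq₁ : ∀ t ∈ I, 0 ≤ η₁' t + f₁ t * η₁ t ^ 2 + g₁ t * η₁ t + h₁ t)
    (hineq₂ : ∀ t ∈ I, 0 ≤ η₂' t + f₂ t * η₂ t ^ 2 + g₂ t * η₂ t + h₂ t)
    (hinit₂ : y₂ t₀ ≤ η₂ t₀)
    (hf₁pos : ∀ t ∈ I, 0 ≤ f₁ t)
    (γ : ℝ) (hγ : γ ∈ Icc (y₂ t₀) (η₁ t₀))
    (hint : ∀ t ∈ I, 0 ≤ γ - y₂ t₀ +
      ∫ τ in t₀..t, Real.exp (∫ s in t₀..τ, f₁ s * (η₁ s + η₂ s) + g₁ s) *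
        ((f₂ τ - f₁ τ) * y₂ τ ^ 2 + (g₂ τ - g₁ τ) * y₂ τ + h₂ τ - h₁ τ)) :
    ∃ y₁ : ℝ → ℝ,
      (∀ t ∈ I, HasDerivWithinAt y₁
        (-(f₁ t * y₁ t ^ 2 + g₁ t * y₁ t + h₁ t)) I t) ∧
      γ ≤ y₁ t₀ ∧ ∀ t ∈ I, y₂ t ≤ y₁ t := by
  obtain ⟨hconn, hleast, hmax⟩ := hI ▸ EReal.ordConnected_isLeast_noMax_setOf hτ₀
  have hsub : ∀ T ∈ I, Icc t₀ T ⊆ I := fun T hT ↦ hconn.out hleast.1 hT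
  have hbounds : ∀ T ∈ I, ∀ y, y t₀ = γ → IsIntegralCurveOn y (riccatiField f₁ g₁ h₁) (Icc t₀ T) →
      y T ∈ Icc (y₂ T) (η₁ T) := fun T hT y hy0 hy ↦
    mem_Icc_of_isIntegralCurveOn_riccatiField (hf₁.mono Icc_subset_Ici_self)
      (hf₂.mono Icc_subset_Ici_self) (hg₁.mono Icc_subset_Ici_self) (hg₂.mono Icc_subset_Ici_self)
      (hh₁.mono Icc_subset_Ici_self) (hh₂.mono Icc_subset_Ici_self)
      (IsIntegralCurveOn.mono hy₂ (hsub T hT))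
      (fun t ht ↦ (hη₁ t (hsub T hT ht)).mono (hsub T hT))
      (fun t ht ↦ (hη₂ t (hsub T hT ht)).mono (hsub T hT))
      (fun t ht ↦ hineq₁ t (hsub T hT ht)) (fun t ht ↦ hineq₂ t (hsub T hT ht)) hinit₂
      (fun t ht ↦ hf₁pos t (hsub T hT ht)) hγ (fun t ht ↦ hint t (hsub T hT ht)) hy hy0
      T (right_mem_Icc.2 (hleast.2 hT))
  obtain ⟨y₁, hy₁0, hy₁⟩ := exists_isIntegralCurveOn_of_forall_Icc hconn hleast hmax
    fun T hT ↦ riccatiField_wellPosed_Icc (hleast.2 hT) (hf₁.mono Icc_subset_Ici_self)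
      (hg₁.mono Icc_subset_Ici_self) (hh₁.mono Icc_subset_Ici_self)
      ((HasDerivWithinAt.continuousOn hy₂).mono (hsub T hT))
      ((HasDerivWithinAt.continuousOn hη₁).mono (hsub T hT))
      fun s hs y hy0 hy ↦ hbounds s (hsub T hT hs) y hy0 hy
  exact ⟨y₁, hy₁, hy₁0.ge, fun t ht ↦ (hbounds t ht y₁ hy₁0 (hy₁.mono (hsub t ht))).1⟩

/-- Theorem 2.1: comparison theorem for Riccati equations. If `y₂` solves the second
Riccati equation on `[t₀, τ₀)` and `η₁, η₂` are C¹ solutions of the corresponding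
differential inequalities with `y₂ t₀ ≤ ηₖ t₀`, `f₁ ≥ 0`, and the stated integral
inequality holds for some `γ ∈ [y₂ t₀, η₁ t₀]`, then the first Riccati equation has a
solution `y₁` on all of `[t₀, τ₀)` with `y₁ t₀ ≥ γ` and `y₁ ≥ y₂`. -/
theorem riccati_comparison
    (t₀ : ℝ) (τ₀ : EReal) (hτ₀ : (t₀ : EReal) < τ₀)
    (f₁ f₂ g₁ g₂ h₁ h₂ : ℝ → ℝ)
    (hf₁ : ContinuousOn f₁ (Ici t₀)) (hf₂ : ContinuousOn f₂ (Ici t₀))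
    (hg₁ : ContinuousOn g₁ (Ici t₀)) (hg₂ : ContinuousOn g₂ (Ici t₀))
    (hh₁ : ContinuousOn h₁ (Ici t₀)) (hh₂ : ContinuousOn h₂ (Ici t₀))
    (I : Set ℝ) (hI : I = {t : ℝ | t₀ ≤ t ∧ (t : EReal) < τ₀})
    (y₂ : ℝ → ℝ)
    (hy₂ : ∀ t ∈ I, HasDerivWithinAt y₂
      (-(f₂ t * y₂ t ^ 2 + g₂ t * y₂ t + h₂ t)) I t)
    (η₁ η₂ η₁' η₂' : ℝ → ℝ)
    (hη₁ : ∀ t ∈ I, HasDerivWithinAt η₁ (η₁' t) I t)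
    (hη₂ : ∀ t ∈ I, HasDerivWithinAt η₂ (η₂' t) I t)
    (hη₁c : ContinuousOn η₁' I) (hη₂c : ContinuousOn η₂' I)
    (hineq₁ : ∀ t ∈ I, 0 ≤ η₁' t + f₁ t * η₁ t ^ 2 + g₁ t * η₁ t + h₁ t)
    (hineq₂ : ∀ t ∈ I, 0 ≤ η₂' t + f₂ t * η₂ t ^ 2 + g₂ t * η₂ t + h₂ t)
    (hinit₁ : y₂ t₀ ≤ η₁ t₀) (hinit₂ : y₂ t₀ ≤ η₂ t₀)
    (hf₁pos : ∀ t ∈ I, 0 ≤ f₁ t)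
    (γ : ℝ) (hγ : γ ∈ Icc (y₂ t₀) (η₁ t₀))
    (hint : ∀ t ∈ I, 0 ≤ γ - y₂ t₀ +
      ∫ τ in t₀..t, Real.exp (∫ s in t₀..τ, f₁ s * (η₁ s + η₂ s) + g₁ s) *
        ((f₂ τ - f₁ τ) * y₂ τ ^ 2 + (g₂ τ - g₁ τ) * y₂ τ + h₂ τ - h₁ τ)) :
    ∃ y₁ : ℝ → ℝ,
      (∀ t ∈ I, HasDerivWithinAt y₁
        (-(f₁ t * y₁ t ^ 2 + g₁ t * y₁ t + h₁ t)) I t) ∧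
      γ ≤ y₁ t₀ ∧ ∀ t ∈ I, y₂ t ≤ y₁ t :=
  riccati_comparison_general t₀ τ₀ hτ₀ f₁ f₂ g₁ g₂ h₁ h₂ hf₁ hf₂ hg₁ hg₂ hh₁ hh₂ I hI y₂ hy₂ η₁ η₂
    η₁' η₂' hη₁ hη₂ hineq₁ hineq₂ hinit₂ hf₁pos γ hγ hint
end

section
/- Let $\varepsilon \ge 0$ and $\beta \in \mathbb{R}$. Then for every $\alpha, \beta_0 \in \mathbb{R}$ the van der Pol equation with parametric excitation $\phi'' + \varepsilon(\phi^2 - 1)\phi' + (1 + \beta\cos t)\phi = 0$ has a solution $\phi$ on the whole half-line $[t_0, +\infty)$ with $\phi(t_0) = \alpha$ and $\phi'(t_0) = \beta_0$; equivalently, the system $\phi' = \psi$, $\psi' = -(1 + \beta\cos t)\phi - \varepsilon(\phi^2 - 1)\psi$ is globally solvable for all initial data at $t_0$. -/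
/-!
Along a solution the energy `φ² + ψ²` has derivative at most `(|β| + 2ε) (φ² + ψ²)`: the
parametric term contributes at most `|β| (φ² + ψ²)`, and the damping `-2ε (φ² - 1) ψ²` at most
`2ε ψ²`. So solutions cannot blow up. To produce them, clamp both arguments of the damping term
at a level `M`: the truncated field is globally Lipschitz, hence has global solutions
(Picard–Lindelöf on intervals of uniform length, chained together), and it obeys the same energy
estimate. With `M` chosen from the initial energy, the truncated solution never reaches the clamp
during one unit of time, so it solves the true equation there; chaining unit time intervals gives
a solution on `[t₀, ∞)`.
-/

open Set Filter Topology Real NNReal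

section GlobalExistence

variable {E : Type*} [NormedAddCommGroup E] [NormedSpace ℝ E]

theorem hasDerivWithinAt_of_isClosed {f f' : ℝ → E} {s : Set ℝ} (hs : IsClosed s)
    (h : ∀ t ∈ s, HasDerivWithinAt f (f' t) s t) (t : ℝ) : HasDerivWithinAt f (f' t) s t := by
  by_cases ht : t ∈ s
  · exact h t ht
  · exact HasFDerivWithinAt.of_notMem_closure (hs.closure_eq.symm ▸ ht)

theorem hasDerivWithinAt_Ici_of_forall_Icc_add_nat_mul {f f' : ℝ → E} {t₀ δ : ℝ} (hδ : 0 < δ)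
    (h : ∀ (n : ℕ), ∀ t ∈ Icc (t₀ + n * δ) (t₀ + n * δ + δ),
      HasDerivWithinAt f (f' t) (Icc (t₀ + n * δ) (t₀ + n * δ + δ)) t) :
    ∀ t ∈ Ici t₀, HasDerivWithinAt f (f' t) (Ici t₀) t := by
  have hIcc (n : ℕ) (t : ℝ) : HasDerivWithinAt f (f' t) (Icc t₀ (t₀ + n * δ + δ)) t := by
    induction n generalizing t with
    | zero => simpa using hasDerivWithinAt_of_isClosed isClosed_Icc (by simpa using h 0) t
    | succ n ih =>
      have hunion := (ih t).union (hasDerivWithinAt_of_isClosed isClosed_Icc (h (n + 1)) t)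
      have hend : t₀ + n * δ + δ = t₀ + (n + 1 : ℕ) * δ := by push_cast; ring
      rwa [hend, Icc_union_Icc_eq_Icc (le_add_of_nonneg_right (by positivity)) (by linarith)]
        at hunion
  intro t ht
  obtain ⟨n, hn⟩ := exists_nat_gt ((t - t₀) / δ)
  refine (hIcc n t).mono_of_mem_nhdsWithin
    (mem_of_superset (inter_mem_nhdsWithin _ (Iio_mem_nhds ?_)) fun s hs => ⟨hs.1, hs.2.le⟩)
  rw [div_lt_iff₀ hδ] at hn
  linarith

theorem exists_forall_hasDerivWithinAt_Ici_of_forall_exists_Icc (v : ℝ → E → E) {δ : ℝ}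
    (hδ : 0 < δ) (hloc : ∀ (t₁ : ℝ) (x₁ : E), ∃ f : ℝ → E, f t₁ = x₁ ∧
      ∀ t ∈ Icc t₁ (t₁ + δ), HasDerivWithinAt f (v t (f t)) (Icc t₁ (t₁ + δ)) t)
    (t₀ : ℝ) (x₀ : E) :
    ∃ f : ℝ → E, f t₀ = x₀ ∧ ∀ t ∈ Ici t₀, HasDerivWithinAt f (v t (f t)) (Ici t₀) t := by
  choose sol hsol₀ hsol using hloc
  let T (n : ℕ) : ℝ := t₀ + n * δ
  let x (n : ℕ) : E := Nat.rec x₀ (fun k xk => sol (T k) xk (T k + δ)) n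
  let N (t : ℝ) : ℕ := ⌊(t - t₀) / δ⌋₊
  let f (t : ℝ) : E := sol (T (N t)) (x (N t)) t
  have hf (n : ℕ) : EqOn f (sol (T n) (x n)) (Icc (T n) (T n + δ)) := by
    intro t ht
    rcases ht.2.lt_or_eq with hlt | rfl
    · have hN : N t = n := by
        rw [Nat.floor_eq_iff (div_nonneg (by linarith [ht.1, mul_nonneg n.cast_nonneg hδ.le])
          hδ.le), le_div_iff₀ hδ, div_lt_iff₀ hδ]
        constructor <;> linarith [ht.1]
      simp only [f, hN]
    · have hN : N (T n + δ) = n + 1 := by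
        simp only [N, T]
        rw [show t₀ + n * δ + δ - t₀ = ((n + 1 : ℕ) : ℝ) * δ by push_cast; ring,
          mul_div_cancel_right₀ _ hδ.ne', Nat.floor_natCast]
      have hT : T n + δ = T (n + 1) := by simp only [T]; push_cast; ring
      simp only [f, hN]
      conv_lhs => rw [hT]
      exact hsol₀ _ _
  refine ⟨f, by simp [f, N, T, x, hsol₀], ?_⟩
  refine hasDerivWithinAt_Ici_of_forall_Icc_add_nat_mul hδ fun n t ht => ?_
  rw [hf n ht]
  exact (hsol _ _ t ht).congr (hf n) (hf n ht)

theorem exists_forall_hasDerivWithinAt_Icc_of_lipschitzWith [CompleteSpace E] {v : ℝ → E → E}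
    {K : ℝ≥0} (hv : ∀ t, LipschitzWith K (v t)) (hc : ∀ x, Continuous (v · x))
    (t₁ : ℝ) (x₁ : E) :
    ∃ f : ℝ → E, f t₁ = x₁ ∧ ∀ t ∈ Icc t₁ (t₁ + (2 * (K + 1) : ℝ)⁻¹),
      HasDerivWithinAt f (v t (f t)) (Icc t₁ (t₁ + (2 * (K + 1) : ℝ)⁻¹)) t := by
  set δ : ℝ := (2 * (K + 1) : ℝ)⁻¹ with hδ
  have hδ₀ : 0 ≤ δ := by positivity
  obtain ⟨C, hC⟩ := isCompact_Icc.exists_bound_of_continuousOn (hc x₁).continuousOn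
    (s := Icc t₁ (t₁ + δ))
  set C' := C.toNNReal
  have hC' (t : ℝ) (ht : t ∈ Icc t₁ (t₁ + δ)) : ‖v t x₁‖ ≤ C' :=
    (hC t ht).trans (Real.le_coe_toNNReal C)
  -- On the ball of radius `C' / (K + 1)` around `x₁` the field is bounded by `2 * C'`,
  -- and `2 * C' * δ` is exactly that radius.
  have hpl : IsPicardLindelof v (tmin := t₁) (tmax := t₁ + δ) ⟨t₁, left_mem_Icc.2 (by linarith)⟩
      x₁ (C' / (K + 1)) 0 (2 * C') K := by
    refine ⟨fun t _ => (hv t).lipschitzOnWith, fun x _ => (hc x).continuousOn, ?_, ?_⟩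
    · intro t ht x hx
      rw [mem_closedBall_iff_norm, NNReal.coe_div, le_div_iff₀ (by positivity)] at hx
      push_cast at hx
      calc ‖v t x‖ ≤ ‖v t x₁‖ + ‖v t x - v t x₁‖ := norm_le_insert' ..
        _ ≤ ‖v t x₁‖ + K * ‖x - x₁‖ := by gcongr; exact (hv t).norm_sub_le x x₁
        _ ≤ 2 * C' := by nlinarith [hC' t ht, norm_nonneg (x - x₁)]
    · simp only [NNReal.coe_zero, sub_zero, add_sub_cancel_left, sub_self, NNReal.coe_div,
        NNReal.coe_mul, NNReal.coe_add, NNReal.coe_one, NNReal.coe_ofNat, hδ]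
      rw [max_eq_left (by positivity)]
      field_simp
      exact le_rfl
  exact hpl.exists_eq_forall_mem_Icc_hasDerivWithinAt₀

theorem exists_forall_hasDerivWithinAt_Ici_of_lipschitzWith [CompleteSpace E] {v : ℝ → E → E}
    {K : ℝ≥0} (hv : ∀ t, LipschitzWith K (v t)) (hc : ∀ x, Continuous (v · x))
    (t₀ : ℝ) (x₀ : E) :
    ∃ f : ℝ → E, f t₀ = x₀ ∧ ∀ t ∈ Ici t₀, HasDerivWithinAt f (v t (f t)) (Ici t₀) t :=
  exists_forall_hasDerivWithinAt_Ici_of_forall_exists_Icc v (by positivity)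
    (exists_forall_hasDerivWithinAt_Icc_of_lipschitzWith hv hc) t₀ x₀

end GlobalExistence

theorem LocallyLipschitz.exists_lipschitzWith_comp {α β γ : Type*} [PseudoMetricSpace α]
    [PseudoMetricSpace β] [PseudoMetricSpace γ] {f : β → γ} (hf : LocallyLipschitz f)
    {r : α → β} {Kr : ℝ≥0} (hr : LipschitzWith Kr r) {s : Set β} (hs : IsCompact s)
    (hrs : ∀ x, r x ∈ s) : ∃ K, LipschitzWith K (f ∘ r) := by
  obtain ⟨K, hK⟩ := (hf.locallyLipschitzOn (s := s)).exists_lipschitzOnWith_of_compact hs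
  exact ⟨K * Kr, lipschitzOnWith_univ.1 (hK.comp hr.lipschitzOnWith fun x _ => hrs x)⟩

noncomputable def clamp (M y : ℝ) : ℝ := max (-M) (min y M)

theorem lipschitzWith_clamp (M : ℝ) : LipschitzWith 1 (clamp M) :=
  (LipschitzWith.id.min_const M).const_max (-M)

theorem clamp_mem_Icc {M : ℝ} (hM : 0 ≤ M) (y : ℝ) : clamp M y ∈ Icc (-M) M :=
  ⟨le_max_left _ _, max_le (by linarith) (min_le_right _ _)⟩

theorem clamp_of_abs_le {M y : ℝ} (h : |y| ≤ M) : clamp M y = y := by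
  rw [clamp, min_eq_left (abs_le.1 h).2, max_eq_right (abs_le.1 h).1]

theorem mul_clamp_mem_Icc {M : ℝ} (hM : 0 ≤ M) (y : ℝ) : y * clamp M y ∈ Icc 0 (y ^ 2) := by
  simp only [clamp, max_def, min_def]
  constructor <;> split_ifs <;> nlinarith

noncomputable def vdpField (ε β : ℝ) (g : ℝ × ℝ → ℝ) (t : ℝ) (p : ℝ × ℝ) : ℝ × ℝ :=
  (p.2, -(1 + β * cos t) * p.1 - ε * g p)

def vdpDamping (p : ℝ × ℝ) : ℝ := (p.1 ^ 2 - 1) * p.2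

-- Clamping keeps `-y² ≤ y g(x, y)`, the only property of the damping the energy estimate uses.
noncomputable def vdpTruncDamping (M : ℝ) (p : ℝ × ℝ) : ℝ :=
  vdpDamping (clamp M p.1, clamp M p.2)

theorem exists_lipschitzWith_vdpTruncDamping {M : ℝ} (hM : 0 ≤ M) :
    ∃ K, LipschitzWith K (vdpTruncDamping M) := by
  have hclamp : LipschitzWith 1 fun p : ℝ × ℝ => (clamp M p.1, clamp M p.2) := by
    simpa [Function.comp_def] using ((lipschitzWith_clamp M).comp LipschitzWith.prod_fst).prodMk
      ((lipschitzWith_clamp M).comp LipschitzWith.prod_snd)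
  have hg : ContDiff ℝ 1 vdpDamping := by unfold vdpDamping; fun_prop
  exact hg.locallyLipschitz.exists_lipschitzWith_comp
    hclamp ((isCompact_Icc (a := -M) (b := M)).prod isCompact_Icc)
    fun p => ⟨clamp_mem_Icc hM p.1, clamp_mem_Icc hM p.2⟩

theorem vdpTruncDamping_eq {M : ℝ} {p : ℝ × ℝ} (h₁ : |p.1| ≤ M) (h₂ : |p.2| ≤ M) :
    vdpTruncDamping M p = vdpDamping p := by
  rw [vdpTruncDamping, clamp_of_abs_le h₁, clamp_of_abs_le h₂]

theorem neg_sq_le_mul_vdpTruncDamping {M : ℝ} (hM : 0 ≤ M) (p : ℝ × ℝ) :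
    -p.2 ^ 2 ≤ p.2 * vdpTruncDamping M p := by
  obtain ⟨h₀, h₁⟩ := mul_clamp_mem_Icc hM p.2
  have : p.2 * vdpTruncDamping M p = clamp M p.1 ^ 2 * (p.2 * clamp M p.2) - p.2 * clamp M p.2 := by
    simp only [vdpTruncDamping, vdpDamping]; ring
  rw [this]
  nlinarith [sq_nonneg (clamp M p.1)]

theorem lipschitzWith_vdpField {ε : ℝ} (β : ℝ) {g : ℝ × ℝ → ℝ} {K : ℝ≥0}
    (hg : LipschitzWith K g) (t : ℝ) :
    LipschitzWith (max 1 (1 + ‖β‖₊ + ‖ε‖₊ * K)) (vdpField ε β g t) := by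
  have hlin : LipschitzWith (‖-(1 + β * cos t)‖₊ * 1)
      fun p : ℝ × ℝ => -(1 + β * cos t) * p.1 :=
    (lipschitzWith_smul (-(1 + β * cos t))).comp LipschitzWith.prod_fst
  have hcoef : ‖-(1 + β * cos t)‖₊ * 1 ≤ 1 + ‖β‖₊ := by
    rw [mul_one, ← NNReal.coe_le_coe, coe_nnnorm, norm_neg]
    push_cast
    calc ‖1 + β * cos t‖ ≤ ‖(1 : ℝ)‖ + ‖β * cos t‖ := norm_add_le _ _
      _ ≤ 1 + ‖β‖ := by
        rw [norm_one, norm_mul]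
        gcongr
        exact mul_le_of_le_one_right (norm_nonneg β) (abs_cos_le_one t)
  exact LipschitzWith.prod_snd.prodMk
    ((hlin.weaken hcoef).sub (by simpa [Function.comp_def] using (lipschitzWith_smul ε).comp hg))

theorem continuous_vdpField_apply (ε β : ℝ) (g : ℝ × ℝ → ℝ) (p : ℝ × ℝ) :
    Continuous (vdpField ε β g · p) := by
  unfold vdpField
  fun_prop

theorem vdpField_energy_deriv_le {ε : ℝ} (hε : 0 ≤ ε) (β : ℝ) {g : ℝ × ℝ → ℝ}
    (hg : ∀ p : ℝ × ℝ, -p.2 ^ 2 ≤ p.2 * g p) (t : ℝ) (p : ℝ × ℝ) :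
    2 * p.1 * (vdpField ε β g t p).1 + 2 * p.2 * (vdpField ε β g t p).2 ≤
      (|β| + 2 * ε) * (p.1 ^ 2 + p.2 ^ 2) := by
  obtain ⟨hcos₁, hcos₂⟩ := abs_le.1 <| show |β * cos t| ≤ |β| by
    rw [abs_mul]; exact mul_le_of_le_one_right (abs_nonneg β) (abs_cos_le_one t)
  have hcross : -(2 * (β * cos t) * (p.1 * p.2)) ≤ |β| * (p.1 ^ 2 + p.2 ^ 2) := by
    nlinarith [mul_nonneg (by linarith : 0 ≤ |β| + β * cos t) (sq_nonneg (p.1 + p.2)),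
      mul_nonneg (by linarith : 0 ≤ |β| - β * cos t) (sq_nonneg (p.1 - p.2))]
  have hdamp : -(2 * ε * (p.2 * g p)) ≤ 2 * ε * p.2 ^ 2 := by nlinarith [hg p]
  simp only [vdpField]
  nlinarith

theorem vdp_energy_le {ε : ℝ} (hε : 0 ≤ ε) (β : ℝ) {g : ℝ × ℝ → ℝ}
    (hg : ∀ p : ℝ × ℝ, -p.2 ^ 2 ≤ p.2 * g p) {f : ℝ → ℝ × ℝ} {a b : ℝ}
    (hf : ∀ t ∈ Icc a b, HasDerivWithinAt f (vdpField ε β g t (f t)) (Icc a b) t) :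
    ∀ t ∈ Icc a b, (f t).1 ^ 2 + (f t).2 ^ 2 ≤
      ((f a).1 ^ 2 + (f a).2 ^ 2) * exp ((|β| + 2 * ε) * (t - a)) := by
  have hcont : ContinuousOn f (Icc a b) := fun t ht => (hf t ht).continuousWithinAt
  have hderiv (t : ℝ) (ht : t ∈ Ico a b) : HasDerivWithinAt (fun s => (f s).1 ^ 2 + (f s).2 ^ 2)
      (2 * (f t).1 * (vdpField ε β g t (f t)).1 + 2 * (f t).2 * (vdpField ε β g t (f t)).2)
      (Ici t) t := by
    have h := (hf t (Ico_subset_Icc_self ht)).mono_of_mem_nhdsWithin (Icc_mem_nhdsGE_of_mem ht)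
    have h₁ : HasDerivWithinAt (fun s => (f s).1) (vdpField ε β g t (f t)).1 (Ici t) t :=
      (hasFDerivAt_fst (p := f t)).comp_hasDerivWithinAt t h
    have h₂ : HasDerivWithinAt (fun s => (f s).2) (vdpField ε β g t (f t)).2 (Ici t) t :=
      (hasFDerivAt_snd (p := f t)).comp_hasDerivWithinAt t h
    exact ((h₁.fun_pow 2).fun_add (h₂.fun_pow 2)).congr_deriv (by push_cast; ring)
  intro t ht
  simpa only [gronwallBound_ε0] using le_gronwallBound_of_liminf_deriv_right_le
    (f := fun s => (f s).1 ^ 2 + (f s).2 ^ 2) (K := |β| + 2 * ε) (ε := 0)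
    (((continuous_fst.comp_continuousOn hcont).pow 2).add
      ((continuous_snd.comp_continuousOn hcont).pow 2))
    (fun t ht r hr => (hderiv t ht).liminf_right_slope_le hr) le_rfl
    (fun t _ => by rw [add_zero]; exact vdpField_energy_deriv_le hε β hg t (f t)) t ht

theorem exists_vdp_solution_Icc {ε : ℝ} (hε : 0 ≤ ε) (β t₁ : ℝ) (x₁ : ℝ × ℝ) :
    ∃ f : ℝ → ℝ × ℝ, f t₁ = x₁ ∧ ∀ t ∈ Icc t₁ (t₁ + 1),
      HasDerivWithinAt f (vdpField ε β vdpDamping t (f t)) (Icc t₁ (t₁ + 1)) t := by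
  set E₁ := (x₁.1 ^ 2 + x₁.2 ^ 2) * exp (|β| + 2 * ε)
  have hM : 0 ≤ √E₁ := sqrt_nonneg _
  obtain ⟨K, hK⟩ := exists_lipschitzWith_vdpTruncDamping hM
  obtain ⟨f, hf₀, hf⟩ := exists_forall_hasDerivWithinAt_Ici_of_lipschitzWith
    (lipschitzWith_vdpField β hK) (continuous_vdpField_apply ε β _) t₁ x₁
  have hf' (t : ℝ) (ht : t ∈ Icc t₁ (t₁ + 1)) : HasDerivWithinAt f
      (vdpField ε β (vdpTruncDamping √E₁) t (f t)) (Icc t₁ (t₁ + 1)) t :=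
    (hf t ht.1).mono Icc_subset_Ici_self
  -- On a unit time interval the energy grows at most by the factor `exp (|β| + 2 ε)`, so the
  -- solution stays in the square `[-√E₁, √E₁]²` where the truncation is inactive.
  have henergy (t : ℝ) (ht : t ∈ Icc t₁ (t₁ + 1)) : (f t).1 ^ 2 + (f t).2 ^ 2 ≤ E₁ := by
    refine (vdp_energy_le hε β (neg_sq_le_mul_vdpTruncDamping hM) hf' t ht).trans ?_
    rw [hf₀]
    exact mul_le_mul_of_nonneg_left (exp_le_exp.2 (by nlinarith [ht.1, ht.2, abs_nonneg β]))
      (by positivity)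
  refine ⟨f, hf₀, fun t ht => ?_⟩
  have hfield : vdpField ε β vdpDamping t (f t) = vdpField ε β (vdpTruncDamping √E₁) t (f t) := by
    rw [vdpField, vdpField, vdpTruncDamping_eq
      (abs_le_sqrt (by nlinarith [henergy t ht, sq_nonneg (f t).2]))
      (abs_le_sqrt (by nlinarith [henergy t ht, sq_nonneg (f t).1]))]
  rw [hfield]
  exact hf' t ht

/-- Global solvability of the van der Pol equation with parametric excitation
`φ'' + ε (φ² - 1) φ' + (1 + β cos t) φ = 0` (with `ε ≥ 0`): for all initial data
`φ t₀ = α`, `φ' t₀ = β₀` there is a solution on all of `[t₀, +∞)`, stated via the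
equivalent system `φ' = ψ`, `ψ' = -(1 + β cos t) φ - ε (φ² - 1) ψ`. -/
theorem van_der_pol_parametric_global
    (t₀ ε β : ℝ) (hε : 0 ≤ ε) (α β₀ : ℝ) :
    ∃ φ ψ : ℝ → ℝ, φ t₀ = α ∧ ψ t₀ = β₀ ∧
      ∀ t ∈ Ici t₀,
        HasDerivWithinAt φ (ψ t) (Ici t₀) t ∧
        HasDerivWithinAt ψ
          (-(1 + β * Real.cos t) * φ t - ε * (φ t ^ 2 - 1) * ψ t) (Ici t₀) t := by
  obtain ⟨f, hf₀, hf⟩ := exists_forall_hasDerivWithinAt_Ici_of_forall_exists_Icc _ one_pos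
    (exists_vdp_solution_Icc hε β) t₀ (α, β₀)
  refine ⟨fun t => (f t).1, fun t => (f t).2, by simp [hf₀], by simp [hf₀], fun t ht => ⟨?_, ?_⟩⟩
  · exact (hasFDerivAt_fst (p := f t)).comp_hasDerivWithinAt t (hf t ht)
  · refine ((hasFDerivAt_snd (p := f t)).comp_hasDerivWithinAt t (hf t ht)).congr_deriv ?_
    simp only [ContinuousLinearMap.coe_snd', vdpField, vdpDamping]
    ring
end

section
/- Let $\varepsilon \ge 0$ and $\Gamma, \omega \in \mathbb{R}$. Then for every $\alpha, \beta_0 \in \mathbb{R}$ the forced van der Pol equation $\phi'' + \varepsilon(\phi^2 - 1)\phi' + \phi = \Gamma\cos(\omega t)$ has a solution $\phi$ on the whole half-line $[t_0, +\infty)$ with $\phi(t_0) = \alpha$ and $\phi'(t_0) = \beta_0$. -/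
/-!
Along a solution the energy `E = φ² + ψ²` satisfies `E' = 2εψ² - 2εφ²ψ² + 2Γψ cos (ωt)`,
and since `ε ≥ 0` the nonlinear damping term is nonpositive, so
`E' ≤ (2ε + |Γ|) E + |Γ|`. Grönwall's inequality therefore bounds every solution on `[t₀, T]`
a priori. On the ball given by this bound the vector field is Lipschitz and bounded, so the
Picard–Lindelöf step length is uniform and finitely many steps reach `T`; uniqueness then lets
the solutions on the intervals `[t₀, T]` be patched into one on `[t₀, ∞)`.
-/

open Set Metric
open scoped NNReal Topology

section Prod

variable {𝕜 F G : Type*} [NontriviallyNormedField 𝕜] [NormedAddCommGroup F] [NormedSpace 𝕜 F]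
  [NormedAddCommGroup G] [NormedSpace 𝕜 G] {f : 𝕜 → F × G} {f' : F × G} {s : Set 𝕜} {x : 𝕜}

theorem HasDerivWithinAt.fst (h : HasDerivWithinAt f f' s x) :
    HasDerivWithinAt (fun t => (f t).1) f'.1 s x :=
  (ContinuousLinearMap.fst 𝕜 F G).hasFDerivAt.comp_hasDerivWithinAt x h

theorem HasDerivWithinAt.snd (h : HasDerivWithinAt f f' s x) :
    HasDerivWithinAt (fun t => (f t).2) f'.2 s x :=
  (ContinuousLinearMap.snd 𝕜 F G).hasFDerivAt.comp_hasDerivWithinAt x h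

end Prod

theorem LipschitzOnWith.norm_le_add_mul {E F : Type*} [SeminormedAddCommGroup E]
    [SeminormedAddCommGroup F] {f : E → F} {K : ℝ≥0} {R : ℝ}
    (hf : LipschitzOnWith K f (closedBall 0 R)) {y : E} (hy : y ∈ closedBall 0 R) :
    ‖f y‖ ≤ ‖f 0‖ + K * R :=
  calc ‖f y‖ ≤ ‖f 0‖ + ‖f y - f 0‖ := norm_le_insert' _ _
    _ ≤ ‖f 0‖ + K * ‖y - 0‖ := by
      gcongr
      exact hf.norm_sub_le hy (mem_closedBall_self (nonempty_closedBall.1 ⟨y, hy⟩))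
    _ ≤ ‖f 0‖ + K * R := by gcongr; exact mem_closedBall_iff_norm.1 hy

variable {E : Type*} [NormedAddCommGroup E] [NormedSpace ℝ E]

def IsSolutionOn (v : ℝ → E → E) (f : ℝ → E) (s : Set ℝ) : Prop :=
  ∀ t ∈ s, HasDerivWithinAt f (v t (f t)) s t

theorem isSolutionOn_Icc_self (v : ℝ → E → E) (f : ℝ → E) (a : ℝ) :
    IsSolutionOn v f (Icc a a) := by
  rw [Icc_self]
  exact fun _ _ => HasFDerivWithinAt.singleton

namespace IsSolutionOn

variable {v : ℝ → E → E} {f g : ℝ → E} {s s' : Set ℝ} {a b c : ℝ}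

theorem mono (hf : IsSolutionOn v f s) (h : s' ⊆ s) : IsSolutionOn v f s' :=
  fun t ht => (hf t (h ht)).mono h

theorem congr (hf : IsSolutionOn v f s) (h : EqOn g f s) : IsSolutionOn v g s := fun t ht => by
  rw [h ht]
  exact (hf t ht).congr h (h ht)

theorem continuousOn (hf : IsSolutionOn v f s) : ContinuousOn f s :=
  fun t ht => (hf t ht).continuousWithinAt

theorem hasDerivWithinAt_Ici (hf : IsSolutionOn v f (Icc a b)) {t : ℝ} (ht : t ∈ Ico a b) :
    HasDerivWithinAt f (v t (f t)) (Ici t) t :=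
  (hf t (Ico_subset_Icc_self ht)).mono_of_mem_nhdsWithin (Icc_mem_nhdsGE_of_mem ht)

theorem union (hf : IsSolutionOn v f s) (hf' : IsSolutionOn v f s') (hs : IsClosed s)
    (hs' : IsClosed s') : IsSolutionOn v f (s ∪ s') := by
  have everywhere {u : Set ℝ} (hu : IsClosed u) (hfu : IsSolutionOn v f u) (t : ℝ) :
      HasDerivWithinAt f (v t (f t)) u t := by
    by_cases ht : t ∈ u
    · exact hfu t ht
    · exact HasFDerivWithinAt.of_notMem_closure (by rwa [hu.closure_eq])
  exact fun t _ => (everywhere hs hf t).union (everywhere hs' hf' t)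

theorem concat (hab : a ≤ b) (hbc : b ≤ c) (hg : IsSolutionOn v g (Icc a b))
    (hf : IsSolutionOn v f (Icc b c)) (hgf : g b = f b) :
    IsSolutionOn v (fun t => if t ≤ b then g t else f t) (Icc a c) := by
  rw [← Icc_union_Icc_eq_Icc hab hbc]
  refine (hg.congr fun t ht => if_pos ht.2).union (hf.congr fun t ht => ?_) isClosed_Icc
    isClosed_Icc
  rcases ht.1.eq_or_lt with rfl | hlt
  · exact (if_pos le_rfl).trans hgf
  · exact if_neg hlt.not_ge

theorem eqOn_Icc {u : Set E} {K : ℝ≥0} (hv : ∀ t, LipschitzOnWith K (v t) u)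
    (hf : IsSolutionOn v f (Icc a b)) (hg : IsSolutionOn v g (Icc a b))
    (hfu : MapsTo f (Icc a b) u) (hgu : MapsTo g (Icc a b) u) (h : f a = g a) :
    EqOn f g (Icc a b) :=
  ODE_solution_unique_of_mem_Icc_right (fun t _ => hv t) hf.continuousOn
    (fun _ ht => hf.hasDerivWithinAt_Ici ht) (fun _ ht => hfu (Ico_subset_Icc_self ht))
    hg.continuousOn (fun _ ht => hg.hasDerivWithinAt_Ici ht)
    (fun _ ht => hgu (Ico_subset_Icc_self ht)) h

end IsSolutionOn

def IsAprioriBound (v : ℝ → E → E) (t₀ : ℝ) (x₀ : E) (T B : ℝ) : Prop :=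
  ∀ s ∈ Icc t₀ T, ∀ f, f t₀ = x₀ → IsSolutionOn v f (Icc t₀ s) → ‖f s‖ ≤ B

namespace IsAprioriBound

variable {v : ℝ → E → E} {t₀ T B : ℝ} {x₀ : E} {f g : ℝ → E}

theorem norm_le (hB : IsAprioriBound v t₀ x₀ T B) (hf0 : f t₀ = x₀)
    (hf : IsSolutionOn v f (Icc t₀ T)) {t : ℝ} (ht : t ∈ Icc t₀ T) : ‖f t‖ ≤ B :=
  hB t ht f hf0 (hf.mono (Icc_subset_Icc_right ht.2))

theorem eqOn (hB : IsAprioriBound v t₀ x₀ T B)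
    (hlip : ∀ R, ∃ K, ∀ t, LipschitzOnWith K (v t) (closedBall 0 R))
    (hf0 : f t₀ = x₀) (hg0 : g t₀ = x₀) (hf : IsSolutionOn v f (Icc t₀ T))
    (hg : IsSolutionOn v g (Icc t₀ T)) : EqOn f g (Icc t₀ T) := by
  obtain ⟨K, hK⟩ := hlip B
  exact hf.eqOn_Icc hK hg (fun t ht => mem_closedBall_zero_iff.2 (hB.norm_le hf0 hf ht))
    (fun t ht => mem_closedBall_zero_iff.2 (hB.norm_le hg0 hg ht)) (hf0.trans hg0.symm)

end IsAprioriBound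

section Existence

variable [CompleteSpace E] {v : ℝ → E → E}

theorem exists_isSolutionOn_Icc_of_norm_le {K : ℝ≥0} {R C s δ : ℝ} {x : E}
    (hcont : ∀ y, Continuous (v · y)) (hlip : ∀ t, LipschitzOnWith K (v t) (closedBall 0 (R + 1)))
    (hC : ∀ t, ∀ y ∈ closedBall (0 : E) (R + 1), ‖v t y‖ ≤ C) (hx : ‖x‖ ≤ R) (hδ : 0 ≤ δ)
    (hCδ : C * δ ≤ 1) :
    ∃ f, f s = x ∧ IsSolutionOn v f (Icc s (s + δ)) := by
  have hball : closedBall x 1 ⊆ closedBall (0 : E) (R + 1) :=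
    closedBall_subset_closedBall' (by rw [dist_zero_right]; linarith)
  have hC₀ : 0 ≤ C := (norm_nonneg _).trans (hC s x (hball (mem_closedBall_self zero_le_one)))
  have hpl : IsPicardLindelof v (tmin := s) (tmax := s + δ) ⟨s, le_rfl, by linarith⟩ x 1 0
      C.toNNReal K :=
    { lipschitzOnWith := fun t _ => (hlip t).mono (by simpa using hball)
      continuousOn := fun y _ => (hcont y).continuousOn
      norm_le := fun t _ y hy =>
        (hC t y (hball (by simpa using hy))).trans (Real.le_coe_toNNReal C)
      mul_max_le := by simpa [Real.coe_toNNReal C hC₀, hδ] using hCδ }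
  exact hpl.exists_eq_forall_mem_Icc_hasDerivWithinAt₀

variable {t₀ T B : ℝ} {x₀ : E}

theorem exists_isSolutionOn_Icc_of_isAprioriBound (hcont : ∀ y, Continuous (v · y))
    (hlip : ∀ R, ∃ K, ∀ t, LipschitzOnWith K (v t) (closedBall 0 R)) {C₀ : ℝ}
    (hv₀ : ∀ t, ‖v t 0‖ ≤ C₀) (hB : IsAprioriBound v t₀ x₀ T B) (hT : t₀ ≤ T) :
    ∃ f, f t₀ = x₀ ∧ IsSolutionOn v f (Icc t₀ T) := by
  have hB₀ : 0 ≤ B :=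
    (norm_nonneg _).trans (hB t₀ ⟨le_rfl, hT⟩ _ rfl (isSolutionOn_Icc_self v (fun _ => x₀) t₀))
  obtain ⟨K, hK⟩ := hlip (B + 1)
  set C := C₀ + K * (B + 1)
  have hC (t) (y) (hy : y ∈ closedBall (0 : E) (B + 1)) : ‖v t y‖ ≤ C :=
    ((hK t).norm_le_add_mul hy).trans (add_le_add_left (hv₀ t) _)
  have hC₀ : 0 ≤ C := add_nonneg ((norm_nonneg _).trans (hv₀ t₀)) (by positivity)
  set δ := (C + 1)⁻¹
  have hδ : 0 < δ := by positivity
  have hCδ : C * δ ≤ 1 := by rw [← div_eq_mul_inv, div_le_one (by linarith)]; linarith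
  have hreach (n : ℕ) : ∃ f, f t₀ = x₀ ∧ IsSolutionOn v f (Icc t₀ (min T (t₀ + n * δ))) := by
    induction n with
    | zero => exact ⟨fun _ => x₀, rfl, by simpa [hT] using isSolutionOn_Icc_self v _ t₀⟩
    | succ n ih =>
      obtain ⟨g, hg0, hg⟩ := ih
      have hnδ : 0 ≤ n * δ := by positivity
      by_cases hTn : T ≤ t₀ + n * δ
      · refine ⟨g, hg0, hg.mono (Icc_subset_Icc_right ?_)⟩
        rw [min_eq_left hTn]
        exact min_le_left _ _
      · push Not at hTn
        rw [min_eq_right hTn.le] at hg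
        obtain ⟨f, hf0, hf⟩ := exists_isSolutionOn_Icc_of_norm_le (s := t₀ + n * δ) hcont hK hC
          (hB _ ⟨by linarith, hTn.le⟩ g hg0 hg) hδ.le hCδ
        have hgf := hg.concat (by linarith) (by linarith) hf hf0.symm
        refine ⟨_, (if_pos (by linarith)).trans hg0, hgf.mono (Icc_subset_Icc_right ?_)⟩
        push_cast
        linarith [min_le_right T (t₀ + (n + 1) * δ)]
  obtain ⟨n, hn⟩ := exists_nat_ge ((T - t₀) / δ)
  obtain ⟨f, hf0, hf⟩ := hreach n
  refine ⟨f, hf0, ?_⟩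
  rwa [min_eq_left (by rw [div_le_iff₀ hδ] at hn; linarith)] at hf

theorem exists_isSolutionOn_Ici_of_isAprioriBound (hcont : ∀ y, Continuous (v · y))
    (hlip : ∀ R, ∃ K, ∀ t, LipschitzOnWith K (v t) (closedBall 0 R)) {C₀ : ℝ}
    (hv₀ : ∀ t, ‖v t 0‖ ≤ C₀) (hB : ∀ T, ∃ B, IsAprioriBound v t₀ x₀ T B) :
    ∃ f, f t₀ = x₀ ∧ IsSolutionOn v f (Ici t₀) := by
  choose B hB using hB
  have hsol (T : ℝ) : ∃ f, f t₀ = x₀ ∧ IsSolutionOn v f (Icc t₀ T) := by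
    rcases le_or_gt t₀ T with hT | hT
    · exact exists_isSolutionOn_Icc_of_isAprioriBound hcont hlip hv₀ (hB T) hT
    · exact ⟨fun _ => x₀, rfl, by simp [Icc_eq_empty_of_lt hT, IsSolutionOn]⟩
  choose F hF₀ hF using hsol
  have hagree {T t : ℝ} (ht : t ∈ Icc t₀ T) : F (t + 1) t = F T t := by
    have hsub {T' : ℝ} (h : min (t + 1) T ≤ T') : Icc t₀ (min (t + 1) T) ⊆ Icc t₀ T' :=
      Icc_subset_Icc_right h
    exact (hB (min (t + 1) T)).eqOn hlip (hF₀ _) (hF₀ _) ((hF _).mono (hsub (min_le_left _ _)))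
      ((hF _).mono (hsub (min_le_right _ _))) ⟨ht.1, le_min (by linarith) ht.2⟩
  refine ⟨fun t => F (t + 1) t, hF₀ _, fun t ht => ?_⟩
  have hnhds : Icc t₀ (t + 1) ∈ 𝓝[Ici t₀] t := by
    rw [← Ici_inter_Iic]
    exact inter_mem_nhdsWithin _ (Iic_mem_nhds (lt_add_one t))
  exact ((hF (t + 1)).congr (fun s hs => hagree hs) t ⟨ht, by linarith⟩).mono_of_mem_nhdsWithin
    hnhds

end Existence

namespace VanDerPol

noncomputable def field (ε Γ ω t : ℝ) (p : ℝ × ℝ) : ℝ × ℝ :=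
  (p.2, -p.1 - ε * (p.1 ^ 2 - 1) * p.2 + Γ * Real.cos (ω * t))

def energy (p : ℝ × ℝ) : ℝ := p.1 ^ 2 + p.2 ^ 2

variable {ε Γ ω : ℝ}

theorem continuous_field_apply (p : ℝ × ℝ) : Continuous (field ε Γ ω · p) := by
  unfold field
  fun_prop

theorem exists_lipschitzOnWith_field (R : ℝ) :
    ∃ K, ∀ t, LipschitzOnWith K (field ε Γ ω t) (closedBall 0 R) := by
  set F : ℝ × ℝ → ℝ × ℝ := fun p => (p.2, -p.1 - ε * (p.1 ^ 2 - 1) * p.2)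
  obtain ⟨K, hK⟩ := (show ContDiff ℝ 1 F by fun_prop).contDiffOn.exists_lipschitzOnWith
    one_ne_zero (convex_closedBall 0 R) (isCompact_closedBall 0 R)
  refine ⟨K, fun t => LipschitzOnWith.of_dist_le_mul fun p hp q hq => ?_⟩
  have hF : ∀ p, field ε Γ ω t p = F p + (0, Γ * Real.cos (ω * t)) := fun p => by
    simp [field, F]
  rw [hF, hF, dist_add_right]
  exact hK.dist_le_mul p hp q hq

theorem norm_field_zero_le (t : ℝ) : ‖field ε Γ ω t 0‖ ≤ |Γ| := by
  simpa [field, Prod.norm_def, abs_mul] using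
    mul_le_of_le_one_right (abs_nonneg Γ) (Real.abs_cos_le_one (ω * t))

theorem norm_le_sqrt_energy (p : ℝ × ℝ) : ‖p‖ ≤ √(energy p) :=
  max_le (Real.abs_le_sqrt (le_add_of_nonneg_right (sq_nonneg p.2)))
    (Real.abs_le_sqrt (le_add_of_nonneg_left (sq_nonneg p.1)))

theorem hasDerivWithinAt_energy {f : ℝ → ℝ × ℝ} {f' : ℝ × ℝ} {s : Set ℝ} {t : ℝ}
    (h : HasDerivWithinAt f f' s t) :
    HasDerivWithinAt (fun u => energy (f u)) (2 * ((f t).1 * f'.1 + (f t).2 * f'.2)) s t :=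
  ((h.fst.pow 2).add (h.snd.pow 2)).congr_deriv (by ring)

theorem deriv_energy_le (hε : 0 ≤ ε) (t : ℝ) (p : ℝ × ℝ) :
    2 * (p.1 * (field ε Γ ω t p).1 + p.2 * (field ε Γ ω t p).2) ≤
      (2 * ε + |Γ|) * energy p + |Γ| := by
  have hforce : 2 * (Γ * Real.cos (ω * t)) * p.2 ≤ |Γ| * (p.2 ^ 2 + 1) := by
    have hc : |Γ * Real.cos (ω * t)| ≤ |Γ| := by
      simpa [abs_mul] using mul_le_of_le_one_right (abs_nonneg Γ) (Real.abs_cos_le_one (ω * t))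
    nlinarith [abs_le.1 hc, sq_nonneg (p.2 - 1), sq_nonneg (p.2 + 1), abs_nonneg Γ]
  simp only [field, energy]
  nlinarith [mul_nonneg hε (mul_nonneg (sq_nonneg p.1) (sq_nonneg p.2)), sq_nonneg p.1,
    abs_nonneg Γ]

theorem energy_le_gronwallBound (hε : 0 ≤ ε) {f : ℝ → ℝ × ℝ} {a b : ℝ}
    (hf : IsSolutionOn (field ε Γ ω) f (Icc a b)) :
    ∀ t ∈ Icc a b, energy (f t) ≤ gronwallBound (energy (f a)) (2 * ε + |Γ|) |Γ| (t - a) :=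
  le_gronwallBound_of_liminf_deriv_right_le
    ((by unfold energy; fun_prop : Continuous energy).comp_continuousOn hf.continuousOn)
    (fun t ht _ => (hasDerivWithinAt_energy (hf.hasDerivWithinAt_Ici ht)).liminf_right_slope_le)
    le_rfl (fun t _ => deriv_energy_le hε t (f t))

theorem isAprioriBound (hε : 0 ≤ ε) (t₀ : ℝ) (x₀ : ℝ × ℝ) (T : ℝ) :
    IsAprioriBound (field ε Γ ω) t₀ x₀ T
      √(gronwallBound (energy x₀) (2 * ε + |Γ|) |Γ| (T - t₀)) := by
  intro s hs f hf₀ hf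
  refine (norm_le_sqrt_energy _).trans (Real.sqrt_le_sqrt ?_)
  calc energy (f s) ≤ gronwallBound (energy x₀) (2 * ε + |Γ|) |Γ| (s - t₀) :=
        hf₀ ▸ energy_le_gronwallBound hε hf s ⟨hs.1, le_rfl⟩
    _ ≤ _ := gronwallBound_mono (by unfold energy; positivity) (abs_nonneg Γ) (by positivity)
        (by linarith [hs.2])

end VanDerPol

/-- Global solvability of the forced van der Pol equation
`φ'' + ε (φ² - 1) φ' + φ = Γ cos (ω t)` (with `ε ≥ 0`): for all initial data
`φ t₀ = α`, `φ' t₀ = β₀` there is a solution on all of `[t₀, +∞)`, stated via the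
equivalent system `φ' = ψ`, `ψ' = -φ - ε (φ² - 1) ψ + Γ cos (ω t)`. -/
theorem van_der_pol_forced_global
    (t₀ ε Γ ω : ℝ) (hε : 0 ≤ ε) (α β₀ : ℝ) :
    ∃ φ ψ : ℝ → ℝ, φ t₀ = α ∧ ψ t₀ = β₀ ∧
      ∀ t ∈ Ici t₀,
        HasDerivWithinAt φ (ψ t) (Ici t₀) t ∧
        HasDerivWithinAt ψ
          (-φ t - ε * (φ t ^ 2 - 1) * ψ t + Γ * Real.cos (ω * t)) (Ici t₀) t := by
  obtain ⟨f, hf₀, hf⟩ := exists_isSolutionOn_Ici_of_isAprioriBound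
    VanDerPol.continuous_field_apply VanDerPol.exists_lipschitzOnWith_field
    VanDerPol.norm_field_zero_le (fun T => ⟨_, VanDerPol.isAprioriBound hε t₀ (α, β₀) T⟩)
  exact ⟨fun t => (f t).1, fun t => (f t).2, congrArg Prod.fst hf₀, congrArg Prod.snd hf₀,
    fun t ht => ⟨(hf t ht).fst, (hf t ht).snd⟩⟩
end

section
/- Let $a \in \mathbb{R}$. Then for every $\alpha, \beta \in \mathbb{R}$ the system $\phi' = -(\phi^2 + \psi^2 - 1)\phi + a\sin t\,\psi$, $\psi' = -a\sin t\,\phi - (\phi^2 + \psi^2 - 1)\psi$ has a solution $(\phi, \psi)$ on the whole half-line $[t_0, +\infty)$ with $\phi(t_0) = \alpha$ and $\psi(t_0) = \beta$. -/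
open Set Real

/-!
In complex notation `z = φ + iψ` the system reads `z' = (1 - |z|²) z - i a sin t · z`, so it
splits into a rotation and a radial equation. The rotation angle is
`θ t = a (cos t - cos t₀)`, and `|z|² = r g²` with `g' = (1 - r g²) g`, a Bernoulli equation
solved by `g s = eˢ / √(1 + r (e²ˢ - 1))` (with `s = t - t₀`), which stays finite for all
`s ≥ 0` because `r = α² + β² ≥ 0`.
-/

noncomputable def bernoulliSolution (r s : ℝ) : ℝ :=
  exp s / √(1 + r * (exp (2 * s) - 1))

@[simp]
lemma bernoulliSolution_zero (r : ℝ) : bernoulliSolution r 0 = 1 := by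
  simp [bernoulliSolution]

lemma one_add_mul_exp_two_mul_sub_one_pos {r s : ℝ} (hr : 0 ≤ r) (hs : 0 ≤ s) :
    0 < 1 + r * (exp (2 * s) - 1) := by
  have : 0 ≤ exp (2 * s) - 1 := sub_nonneg.2 (one_le_exp (by positivity))
  positivity

lemma hasDerivAt_bernoulliSolution {r s : ℝ} (hD : 0 < 1 + r * (exp (2 * s) - 1)) :
    HasDerivAt (bernoulliSolution r)
      ((1 - r * bernoulliSolution r s ^ 2) * bernoulliSolution r s) s := by
  have hexp2 : HasDerivAt (fun s => exp (2 * s)) (exp (2 * s) * 2) s := by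
    simpa using ((hasDerivAt_id s).const_mul 2).exp
  have hroot := (((hexp2.sub_const 1).const_mul r).const_add 1).sqrt hD.ne'
  have hS : √(1 + r * (exp (2 * s) - 1)) ≠ 0 := (sqrt_pos.2 hD).ne'
  have hsq : √(1 + r * (exp (2 * s) - 1)) ^ 2 = 1 + r * (exp (2 * s) - 1) := sq_sqrt hD.le
  refine ((hasDerivAt_exp s).div hroot hS).congr_deriv ?_
  simp only [bernoulliSolution]
  generalize √(1 + r * (exp (2 * s) - 1)) = S at hsq hS ⊢
  field_simp
  rw [hsq, ← exp_nat_mul]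
  ring_nf

section Rotation

variable {g θ : ℝ → ℝ} {t ω α β : ℝ}

lemma rotated_sq_add_sq (x y c s : ℝ) (hcs : s ^ 2 + c ^ 2 = 1) :
    (x * c - y * s) ^ 2 + (y * c + x * s) ^ 2 = x ^ 2 + y ^ 2 := by
  linear_combination (x ^ 2 + y ^ 2) * hcs

lemma hasDerivAt_scaled_rotation
    (hg : HasDerivAt g ((1 - (α ^ 2 + β ^ 2) * g t ^ 2) * g t) t) (hθ : HasDerivAt θ ω t) :
    let φ := fun t => g t * (α * cos (θ t) - β * sin (θ t))
    let ψ := fun t => g t * (β * cos (θ t) + α * sin (θ t))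
    HasDerivAt φ (-(φ t ^ 2 + ψ t ^ 2 - 1) * φ t - ω * ψ t) t ∧
      HasDerivAt ψ (ω * φ t - (φ t ^ 2 + ψ t ^ 2 - 1) * ψ t) t := by
  intro φ ψ
  have hnorm : φ t ^ 2 + ψ t ^ 2 = (α ^ 2 + β ^ 2) * g t ^ 2 := by
    simp only [φ, ψ, mul_pow, ← mul_add,
      rotated_sq_add_sq α β _ _ (sin_sq_add_cos_sq (θ t))]
    ring
  have hcos := hθ.cos
  have hsin := hθ.sin
  rw [hnorm]
  constructor
  · exact (hg.mul ((hcos.const_mul α).sub (hsin.const_mul β))).congr_deriv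
      (by simp only [φ, ψ, Pi.sub_apply]; ring)
  · exact (hg.mul ((hcos.const_mul β).add (hsin.const_mul α))).congr_deriv
      (by simp only [φ, ψ, Pi.add_apply]; ring)

end Rotation

/-- Global solvability of the system (1.15):
`φ' = -(φ² + ψ² - 1) φ + a sin t · ψ`, `ψ' = -a sin t · φ - (φ² + ψ² - 1) ψ`
for all initial data at `t₀`. -/
theorem system_115_global
    (t₀ a : ℝ) (α β : ℝ) :
    ∃ φ ψ : ℝ → ℝ, φ t₀ = α ∧ ψ t₀ = β ∧
      ∀ t ∈ Ici t₀,
        HasDerivWithinAt φ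
          (-(φ t ^ 2 + ψ t ^ 2 - 1) * φ t + a * Real.sin t * ψ t) (Ici t₀) t ∧
        HasDerivWithinAt ψ
          (-(a * Real.sin t) * φ t - (φ t ^ 2 + ψ t ^ 2 - 1) * ψ t) (Ici t₀) t := by
  set r := α ^ 2 + β ^ 2
  let g := fun t => bernoulliSolution r (t - t₀)
  let θ := fun t => a * (cos t - cos t₀)
  refine ⟨fun t => g t * (α * cos (θ t) - β * sin (θ t)),
    fun t => g t * (β * cos (θ t) + α * sin (θ t)), by simp [g, θ], by simp [g, θ], ?_⟩
  intro t ht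
  have hg : HasDerivAt g ((1 - r * g t ^ 2) * g t) t :=
    (hasDerivAt_bernoulliSolution (one_add_mul_exp_two_mul_sub_one_pos
      (by positivity) (sub_nonneg.2 ht))).comp_sub_const t t₀
  have hθ : HasDerivAt θ (-(a * sin t)) t := by
    simpa using ((hasDerivAt_cos t).sub_const (cos t₀)).const_mul a
  obtain ⟨hφ, hψ⟩ := hasDerivAt_scaled_rotation hg hθ
  exact ⟨(hφ.congr_deriv (by ring)).hasDerivWithinAt, hψ.hasDerivWithinAt⟩
end
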